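/- arXiv:2204.03118 — 4 statements merged into one kernel-verified Lean document; each statement's English description precedes it below -/
import Mathlib

section
/- Let p and q be strictly positive probability density functions on [0,1]^2 (measurable, integrating to 1) such that the expected conditional KL scores S(p,q) and S(p,p) are finite. Then S(p,q) ≥ S(p,p). That is, the conditional KL score is a proper scoring rule. -/
open Set MeasureTheory

/-- The conditional Kullback–Leibler (CKL) score. -/
noncomputable def condKLScore (q : ℝ → ℝ → ℝ) (x1 y1 x2 y2 : ℝ) : ℝ :=
  -Real.log (q x1 y1 * q x2 y2 / (q x1 y1 * q x2 y2 + q x1 y2 * q x2 y1))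

/-- The unit box `[0,1]⁴` in `ℝ × ℝ × ℝ × ℝ`, for `(x¹, y¹, x², y²)`. -/
def unitBox4 : Set (ℝ × ℝ × ℝ × ℝ) :=
  Icc (0:ℝ) 1 ×ˢ (Icc (0:ℝ) 1 ×ˢ (Icc (0:ℝ) 1 ×ˢ Icc (0:ℝ) 1))

/-- The integrand of the expected conditional KL score
`S(x¹,y¹,x²,y²,q) · p(x¹,y¹) p(x²,y²)`. -/
noncomputable def cklIntegrand (p q : ℝ → ℝ → ℝ) (w : ℝ × ℝ × ℝ × ℝ) : ℝ :=
  condKLScore q w.1 w.2.1 w.2.2.1 w.2.2.2 * (p w.1 w.2.1 * p w.2.2.1 w.2.2.2)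

/-- The expected conditional KL score `S(p,q)`. -/
noncomputable def expCondKLScore (p q : ℝ → ℝ → ℝ) : ℝ :=
  ∫ w in unitBox4, cklIntegrand p q w

/-- The pointwise Gibbs inequality used in the symmetrized form of the score. -/
lemma ckl_gibbs {a b c d : ℝ} (ha : 0 < a) (hb : 0 < b) (hc : 0 < c) (hd : 0 < d) :
    -Real.log (c / (c + d)) * c + -Real.log (d / (d + c)) * d ≤
    -Real.log (a / (a + b)) * c + -Real.log (b / (b + a)) * d := by
  have hab : (0:ℝ) < a + b := by linarith
  have hcd : (0:ℝ) < c + d := by linarith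
  have k1 : Real.log (a / (a + b)) - Real.log (c / (c + d)) ≤ a * (c + d) / ((a + b) * c) - 1 := by
    rw [← Real.log_div (by positivity) (by positivity)]
    have h : a / (a + b) / (c / (c + d)) = a * (c + d) / ((a + b) * c) := by
      field_simp
    rw [h]
    exact Real.log_le_sub_one_of_pos (by positivity)
  have k2 : Real.log (b / (b + a)) - Real.log (d / (d + c)) ≤ b * (d + c) / ((b + a) * d) - 1 := by
    rw [← Real.log_div (by positivity) (by positivity)]
    have h : b / (b + a) / (d / (d + c)) = b * (d + c) / ((b + a) * d) := by
      field_simp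
    rw [h]
    exact Real.log_le_sub_one_of_pos (by positivity)
  have e1 : c * (a * (c + d) / ((a + b) * c) - 1) = a * (c + d) / (a + b) - c := by
    field_simp
  have e2 : d * (b * (d + c) / ((b + a) * d) - 1) = b * (d + c) / (b + a) - d := by
    field_simp
  have hsum : a * (c + d) / (a + b) + b * (d + c) / (b + a) = c + d := by
    rw [add_comm b a, add_comm d c]
    field_simp
  nlinarith [mul_le_mul_of_nonneg_left k1 hc.le, mul_le_mul_of_nonneg_left k2 hd.le, e1, e2, hsum]

/-- The measurable equiv `(x¹, y¹, x², y²) ↦ (x¹, y², x², y¹)`. -/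
def cklSwap : (ℝ × ℝ × ℝ × ℝ) ≃ᵐ (ℝ × ℝ × ℝ × ℝ) :=
  (MeasurableEquiv.refl ℝ).prodCongr <|
    (((MeasurableEquiv.refl ℝ).prodCongr MeasurableEquiv.prodComm).trans
      ((MeasurableEquiv.prodAssoc (α := ℝ) (β := ℝ) (γ := ℝ)).symm.trans
        ((MeasurableEquiv.prodComm.prodCongr (MeasurableEquiv.refl ℝ)).trans
          ((MeasurableEquiv.prodAssoc).trans
            ((MeasurableEquiv.refl ℝ).prodCongr MeasurableEquiv.prodComm)))))

lemma cklSwap_apply (w : ℝ × ℝ × ℝ × ℝ) : cklSwap w = (w.1, w.2.2.2, w.2.2.1, w.2.1) := rfl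

lemma cklSwap_mp : MeasurePreserving (⇑cklSwap) (volume : Measure (ℝ × ℝ × ℝ × ℝ)) volume := by
  have volSwap : ∀ {α β : Type} [MeasureSpace α] [MeasureSpace β]
      [SFinite (volume : Measure α)] [SFinite (volume : Measure β)],
      MeasurePreserving (Prod.swap : α × β → β × α) volume volume :=
    fun {α β} _ _ _ _ => Measure.measurePreserving_swap
  have hid : MeasurePreserving (id : ℝ → ℝ) volume volume := MeasurePreserving.id _
  have f1 : MeasurePreserving (Prod.map (id : ℝ → ℝ) (Prod.map (id : ℝ → ℝ)
      (Prod.swap : ℝ × ℝ → ℝ × ℝ))) (volume : Measure (ℝ × ℝ × ℝ × ℝ)) volume :=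
    hid.prod (hid.prod volSwap)
  have f2 : MeasurePreserving (Prod.map (id : ℝ → ℝ)
      (⇑(MeasurableEquiv.prodAssoc (α := ℝ) (β := ℝ) (γ := ℝ)).symm))
      (volume : Measure (ℝ × ℝ × ℝ × ℝ)) (volume : Measure (ℝ × (ℝ × ℝ) × ℝ)) :=
    hid.prod (MeasureTheory.volume_preserving_prodAssoc.symm _)
  have f3 : MeasurePreserving (Prod.map (id : ℝ → ℝ) (Prod.map (Prod.swap : ℝ × ℝ → ℝ × ℝ)
      (id : ℝ → ℝ))) (volume : Measure (ℝ × (ℝ × ℝ) × ℝ)) volume :=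
    hid.prod (volSwap.prod hid)
  have f4 : MeasurePreserving (Prod.map (id : ℝ → ℝ)
      (⇑(MeasurableEquiv.prodAssoc (α := ℝ) (β := ℝ) (γ := ℝ))))
      (volume : Measure (ℝ × (ℝ × ℝ) × ℝ)) (volume : Measure (ℝ × ℝ × ℝ × ℝ)) :=
    hid.prod MeasureTheory.volume_preserving_prodAssoc
  have hcomp := ((((f1.comp f4).comp f3).comp f2).comp f1)
  have heq : ⇑cklSwap = (Prod.map (id : ℝ → ℝ) (Prod.map (id : ℝ → ℝ)
      (Prod.swap : ℝ × ℝ → ℝ × ℝ))) ∘ (Prod.map (id : ℝ → ℝ)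
      (⇑(MeasurableEquiv.prodAssoc (α := ℝ) (β := ℝ) (γ := ℝ)))) ∘
      (Prod.map (id : ℝ → ℝ) (Prod.map (Prod.swap : ℝ × ℝ → ℝ × ℝ) (id : ℝ → ℝ))) ∘
      (Prod.map (id : ℝ → ℝ) (⇑(MeasurableEquiv.prodAssoc (α := ℝ) (β := ℝ) (γ := ℝ)).symm)) ∘
      (Prod.map (id : ℝ → ℝ) (Prod.map (id : ℝ → ℝ) (Prod.swap : ℝ × ℝ → ℝ × ℝ))) := by
    funext w
    obtain ⟨a, b, c, d⟩ := w
    rfl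
  rw [heq]
  exact hcomp

lemma cklSwap_preimage_unitBox4 : ⇑cklSwap ⁻¹' unitBox4 = unitBox4 := by
  ext ⟨a, b, c, d⟩
  simp only [unitBox4, mem_preimage, cklSwap_apply, mem_prod]
  tauto

lemma cklSwap_setIntegral (f : ℝ × ℝ × ℝ × ℝ → ℝ) :
    ∫ w in unitBox4, f (cklSwap w) = ∫ w in unitBox4, f w := by
  have := cklSwap_mp.setIntegral_preimage_emb cklSwap.measurableEmbedding f unitBox4
  rwa [cklSwap_preimage_unitBox4] at this

lemma cklSwap_integrableOn {f : ℝ × ℝ × ℝ × ℝ → ℝ} (hf : IntegrableOn f unitBox4) :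
    IntegrableOn (f ∘ ⇑cklSwap) unitBox4 := by
  have := (cklSwap_mp.integrableOn_comp_preimage cklSwap.measurableEmbedding
    (f := f) (s := unitBox4)).mpr hf
  rwa [cklSwap_preimage_unitBox4] at this

/-- The conditional KL score is a proper scoring rule: for strictly positive
probability densities `p`, `q` on `[0,1]²` with finite expected scores,
`S(p,q) ≥ S(p,p)`. -/
theorem condKLScore_proper (p q : ℝ → ℝ → ℝ)
    (hpm : Measurable fun z : ℝ × ℝ => p z.1 z.2)
    (hqm : Measurable fun z : ℝ × ℝ => q z.1 z.2)
    (hppos : ∀ x ∈ Icc (0:ℝ) 1, ∀ y ∈ Icc (0:ℝ) 1, 0 < p x y)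
    (hqpos : ∀ x ∈ Icc (0:ℝ) 1, ∀ y ∈ Icc (0:ℝ) 1, 0 < q x y)
    (hp1 : ∫ z in Icc (0:ℝ) 1 ×ˢ Icc (0:ℝ) 1, p z.1 z.2 = 1)
    (hq1 : ∫ z in Icc (0:ℝ) 1 ×ˢ Icc (0:ℝ) 1, q z.1 z.2 = 1)
    (hfin_pq : IntegrableOn (cklIntegrand p q) unitBox4)
    (hfin_pp : IntegrableOn (cklIntegrand p p) unitBox4) :
    expCondKLScore p q ≥ expCondKLScore p p := by
  set F := cklIntegrand p q with hF
  set G := cklIntegrand p p with hG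
  have hFσ : IntegrableOn (F ∘ ⇑cklSwap) unitBox4 := cklSwap_integrableOn hfin_pq
  have hGσ : IntegrableOn (G ∘ ⇑cklSwap) unitBox4 := cklSwap_integrableOn hfin_pp
  have hbox : MeasurableSet unitBox4 :=
    (measurableSet_Icc.prod (measurableSet_Icc.prod (measurableSet_Icc.prod measurableSet_Icc)))
  -- pointwise inequality on the box
  have hpt : ∀ w ∈ unitBox4, (fun w => G w + (G ∘ ⇑cklSwap) w) w ≤
      (fun w => F w + (F ∘ ⇑cklSwap) w) w := by
    rintro ⟨x1, y1, x2, y2⟩ hw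
    rw [unitBox4, mem_prod, mem_prod, mem_prod] at hw
    obtain ⟨hx1, hy1, hx2, hy2⟩ := hw
    have ha : 0 < q x1 y1 * q x2 y2 := mul_pos (hqpos _ hx1 _ hy1) (hqpos _ hx2 _ hy2)
    have hb : 0 < q x1 y2 * q x2 y1 := mul_pos (hqpos _ hx1 _ hy2) (hqpos _ hx2 _ hy1)
    have hc : 0 < p x1 y1 * p x2 y2 := mul_pos (hppos _ hx1 _ hy1) (hppos _ hx2 _ hy2)
    have hd : 0 < p x1 y2 * p x2 y1 := mul_pos (hppos _ hx1 _ hy2) (hppos _ hx2 _ hy1)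
    simpa [hF, hG, cklIntegrand, condKLScore, cklSwap_apply] using
      ckl_gibbs ha hb hc hd
  have hmono : ∫ w in unitBox4, (G w + (G ∘ ⇑cklSwap) w) ≤
      ∫ w in unitBox4, (F w + (F ∘ ⇑cklSwap) w) :=
    setIntegral_mono_on (hfin_pp.add hGσ) (hfin_pq.add hFσ) hbox hpt
  rw [integral_add hfin_pp hGσ, integral_add hfin_pq hFσ] at hmono
  have h1 : ∫ w in unitBox4, (F ∘ ⇑cklSwap) w = ∫ w in unitBox4, F w := cklSwap_setIntegral F
  have h2 : ∫ w in unitBox4, (G ∘ ⇑cklSwap) w = ∫ w in unitBox4, G w := cklSwap_setIntegral G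
  rw [h1, h2] at hmono
  simp only [expCondKLScore, ge_iff_le]
  linarith
end

section
/- Let p and q be continuous strictly positive probability density functions on [0,1]^2 with S(p,q) and S(p,p) finite. If S(p,q) = S(p,p), then for all x¹,y¹,x²,y² ∈ [0,1], q(x¹,y¹)q(x²,y²) / (q(x¹,y¹)q(x²,y²) + q(x¹,y²)q(x²,y¹)) = p(x¹,y¹)p(x²,y²) / (p(x¹,y¹)p(x²,y²) + p(x¹,y²)p(x²,y¹)); equivalently, the cross-ratios satisfy q(x¹,y¹)q(x²,y²)/(q(x¹,y²)q(x²,y¹)) = p(x¹,y¹)p(x²,y²)/(p(x¹,y²)p(x²,y¹)). -/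
/-!
Pair each point `(x¹, y¹, x², y²)` with its image `(x¹, y², x², y¹)` under the measure-preserving
swap of `y¹` and `y²`. The two summands of the symmetrized integrand are weighted by
`p(x¹,y¹)p(x²,y²)` and `p(x¹,y²)p(x²,y¹)` and score the two-point law `∝ (q(x¹,y¹)q(x²,y²),
q(x¹,y²)q(x²,y¹))`, so by Gibbs' inequality (concavity of `log`) the symmetrized integrand for
`q` dominates the one for `p` pointwise, strictly wherever the conditional probabilities differ.
Since `S(p,q) = S(p,p)`, the continuous nonnegative difference has integral zero over the box,
so by continuity it vanishes everywhere on it.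
-/

open Set MeasureTheory

open Real

theorem mul_log_div_add_mul_log_div_le_zero {a a' b b' : ℝ} (ha : 0 < a) (ha' : 0 < a')
    (hb : 0 < b) (hb' : 0 < b') (haa : a + a' = 1) (hbb : b + b' = 1) :
    a * log (b / a) + a' * log (b' / a') ≤ 0 := by
  have := strictConcaveOn_log_Ioi.concaveOn.2 (div_pos hb ha) (div_pos hb' ha') ha.le ha'.le haa
  simpa [mul_div_cancel₀ _ ha.ne', mul_div_cancel₀ _ ha'.ne', hbb] using this

theorem mul_log_div_add_mul_log_div_lt_zero {a a' b b' : ℝ} (ha : 0 < a) (ha' : 0 < a')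
    (hb : 0 < b) (hb' : 0 < b') (haa : a + a' = 1) (hbb : b + b' = 1) (hne : b ≠ a) :
    a * log (b / a) + a' * log (b' / a') < 0 := by
  have hne' : b / a ≠ b' / a' := by
    rw [Ne, div_eq_div_iff ha.ne' ha'.ne']
    contrapose! hne
    linear_combination hne - b * haa + a * hbb
  have := strictConcaveOn_log_Ioi.2 (div_pos hb ha) (div_pos hb' ha') hne' ha ha' haa
  simpa [mul_div_cancel₀ _ ha.ne', mul_div_cancel₀ _ ha'.ne', hbb] using this

theorem div_add_div_add_comm_eq_one {a a' : ℝ} (h : a + a' ≠ 0) :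
    a / (a + a') + a' / (a' + a) = 1 := by
  rw [add_comm a' a, ← add_div, div_self h]

theorem div_eq_div_of_div_add_eq_div_add {a a' b b' : ℝ} (ha : 0 < a) (ha' : 0 < a')
    (hb : 0 < b) (hb' : 0 < b') (h : b / (b + b') = a / (a + a')) : b / b' = a / a' := by
  rw [div_eq_div_iff (by positivity) (by positivity)] at h
  rw [div_eq_div_iff hb'.ne' ha'.ne']
  linarith

/-- `(A + A')` times the cross entropy of the two-point law `∝ (B, B')` relative to the
two-point law `∝ (A, A')`. -/
noncomputable def pairCrossEntropy (A A' B B' : ℝ) : ℝ :=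
  -log (B / (B + B')) * A + -log (B' / (B' + B)) * A'

theorem pairCrossEntropy_self_sub {A A' B B' : ℝ} (hA : 0 < A) (hA' : 0 < A') (hB : 0 < B)
    (hB' : 0 < B') :
    pairCrossEntropy A A' A A' - pairCrossEntropy A A' B B' = (A + A') *
      (A / (A + A') * log (B / (B + B') / (A / (A + A')))
        + A' / (A' + A) * log (B' / (B' + B) / (A' / (A' + A)))) := by
  have hA₁ : (A + A') * (A / (A + A')) = A := mul_div_cancel₀ _ (by positivity)
  have hA₂ : (A + A') * (A' / (A' + A)) = A' := by
    rw [add_comm A' A]; exact mul_div_cancel₀ _ (by positivity)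
  rw [log_div (x := B / (B + B')) (by positivity) (by positivity),
    log_div (x := B' / (B' + B)) (by positivity) (by positivity), pairCrossEntropy, pairCrossEntropy]
  linear_combination (log (A / (A + A')) - log (B / (B + B'))) * hA₁
    + (log (A' / (A' + A)) - log (B' / (B' + B))) * hA₂

theorem pairCrossEntropy_self_le {A A' B B' : ℝ} (hA : 0 < A) (hA' : 0 < A') (hB : 0 < B)
    (hB' : 0 < B') : pairCrossEntropy A A' A A' ≤ pairCrossEntropy A A' B B' := by
  rw [← sub_nonpos, pairCrossEntropy_self_sub hA hA' hB hB']
  refine mul_nonpos_of_nonneg_of_nonpos (by positivity) ?_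
  exact mul_log_div_add_mul_log_div_le_zero (by positivity) (by positivity) (by positivity)
    (by positivity) (div_add_div_add_comm_eq_one (by positivity))
    (div_add_div_add_comm_eq_one (by positivity))

theorem pairCrossEntropy_self_lt {A A' B B' : ℝ} (hA : 0 < A) (hA' : 0 < A') (hB : 0 < B)
    (hB' : 0 < B') (hne : B / (B + B') ≠ A / (A + A')) :
    pairCrossEntropy A A' A A' < pairCrossEntropy A A' B B' := by
  rw [← sub_neg, pairCrossEntropy_self_sub hA hA' hB hB']
  refine mul_neg_of_pos_of_neg (by positivity) ?_
  exact mul_log_div_add_mul_log_div_lt_zero (by positivity) (by positivity) (by positivity)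
    (by positivity) (div_add_div_add_comm_eq_one (by positivity))
    (div_add_div_add_comm_eq_one (by positivity)) hne

theorem ContinuousOn.eqOn_zero_of_setIntegral_eq_zero {X : Type*} [TopologicalSpace X]
    [MeasurableSpace X] {μ : Measure X} [μ.IsOpenPosMeasure] {s : Set X} {f : X → ℝ}
    (hf : ContinuousOn f s) (hs : MeasurableSet s) (hsi : s ⊆ closure (interior s))
    (hnn : ∀ x ∈ s, 0 ≤ f x) (hint : IntegrableOn f s μ) (h0 : ∫ x in s, f x ∂μ = 0) :
    EqOn f 0 s :=
  Measure.eqOn_of_ae_eq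
    ((setIntegral_eq_zero_iff_of_nonneg_ae (ae_restrict_of_forall_mem hs hnn) hint).1 h0)
    hf continuousOn_const hsi

theorem measurableSet_unitBox4 : MeasurableSet unitBox4 :=
  measurableSet_Icc.prod (measurableSet_Icc.prod (measurableSet_Icc.prod measurableSet_Icc))

theorem isCompact_unitBox4 : IsCompact unitBox4 :=
  isCompact_Icc.prod (isCompact_Icc.prod (isCompact_Icc.prod isCompact_Icc))

theorem unitBox4_subset_closure_interior : unitBox4 ⊆ closure (interior unitBox4) := by
  simp only [unitBox4, interior_prod_eq, closure_prod_eq, closure_interior_Icc zero_ne_one,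
    subset_refl]

noncomputable def swapY : (ℝ × ℝ × ℝ × ℝ) ≃ᵐ (ℝ × ℝ × ℝ × ℝ) :=
  (MeasurableEquiv.refl ℝ).prodCongr <| MeasurableEquiv.prodAssoc.symm.trans <|
    MeasurableEquiv.prodComm.trans <| (MeasurableEquiv.refl ℝ).prodCongr MeasurableEquiv.prodComm

theorem swapY_apply (x1 y1 x2 y2 : ℝ) : swapY (x1, y1, x2, y2) = (x1, y2, x2, y1) := rfl

theorem continuous_swapY : Continuous swapY :=
  show Continuous fun w : ℝ × ℝ × ℝ × ℝ => (w.1, w.2.2.2, w.2.2.1, w.2.1) by fun_prop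

theorem measurePreserving_swapY : MeasurePreserving swapY volume volume := by
  refine (MeasurePreserving.id volume).prod ?_
  exact ((MeasurePreserving.id volume).prod Measure.measurePreserving_swap).comp
    (Measure.measurePreserving_swap.comp (volume_preserving_prodAssoc.symm _))

theorem preimage_swapY_unitBox4 : swapY ⁻¹' unitBox4 = unitBox4 := by
  ext ⟨x1, y1, x2, y2⟩
  simp only [mem_preimage, swapY_apply, unitBox4, mem_prod]
  tauto

theorem mapsTo_swapY_unitBox4 : MapsTo swapY unitBox4 unitBox4 := fun w hw => by
  rwa [← mem_preimage, preimage_swapY_unitBox4]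

theorem setIntegral_comp_swapY {E : Type*} [NormedAddCommGroup E] [NormedSpace ℝ E]
    (f : ℝ × ℝ × ℝ × ℝ → E) :
    ∫ w in unitBox4, f (swapY w) = ∫ w in unitBox4, f w := by
  simpa only [preimage_swapY_unitBox4] using
    measurePreserving_swapY.setIntegral_preimage_emb swapY.measurableEmbedding f unitBox4

theorem IntegrableOn.comp_swapY {E : Type*} [NormedAddCommGroup E] {f : ℝ × ℝ × ℝ × ℝ → E} (hf : IntegrableOn f unitBox4) :
    IntegrableOn (fun w => f (swapY w)) unitBox4 := by
  have := (measurePreserving_swapY.integrableOn_comp_preimage swapY.measurableEmbedding).2 hf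
  rwa [preimage_swapY_unitBox4] at this

section CKL

variable {p q : ℝ → ℝ → ℝ}

theorem ContinuousOn.comp_unitBox4 {f : ℝ → ℝ → ℝ}
    (hf : ContinuousOn (fun z : ℝ × ℝ => f z.1 z.2) (Icc (0:ℝ) 1 ×ˢ Icc (0:ℝ) 1))
    {i j : ℝ × ℝ × ℝ × ℝ → ℝ} (hi : Continuous i) (hj : Continuous j)
    (hij : ∀ w ∈ unitBox4, i w ∈ Icc (0:ℝ) 1 ∧ j w ∈ Icc (0:ℝ) 1) :
    ContinuousOn (fun w => f (i w) (j w)) unitBox4 :=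
  hf.comp (hi.prodMk hj).continuousOn hij

theorem mul_pos_of_mem_unitBox4 (hpos : ∀ x ∈ Icc (0:ℝ) 1, ∀ y ∈ Icc (0:ℝ) 1, 0 < p x y)
    {x1 y1 x2 y2 : ℝ} (hw : (x1, y1, x2, y2) ∈ unitBox4) :
    0 < p x1 y1 * p x2 y2 ∧ 0 < p x1 y2 * p x2 y1 :=
  ⟨mul_pos (hpos _ hw.1 _ hw.2.1) (hpos _ hw.2.2.1 _ hw.2.2.2),
    mul_pos (hpos _ hw.1 _ hw.2.2.2) (hpos _ hw.2.2.1 _ hw.2.1)⟩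

theorem continuousOn_cklIntegrand
    (hpc : ContinuousOn (fun z : ℝ × ℝ => p z.1 z.2) (Icc (0:ℝ) 1 ×ˢ Icc (0:ℝ) 1))
    (hqc : ContinuousOn (fun z : ℝ × ℝ => q z.1 z.2) (Icc (0:ℝ) 1 ×ˢ Icc (0:ℝ) 1))
    (hqpos : ∀ x ∈ Icc (0:ℝ) 1, ∀ y ∈ Icc (0:ℝ) 1, 0 < q x y) :
    ContinuousOn (cklIntegrand p q) unitBox4 := by
  have hB := (hqc.comp_unitBox4 (by fun_prop) (by fun_prop) fun w hw => ⟨hw.1, hw.2.1⟩).mul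
    (hqc.comp_unitBox4 (by fun_prop) (by fun_prop) fun w hw => ⟨hw.2.2.1, hw.2.2.2⟩)
  have hB' := (hqc.comp_unitBox4 (by fun_prop) (by fun_prop) fun w hw => ⟨hw.1, hw.2.2.2⟩).mul
    (hqc.comp_unitBox4 (by fun_prop) (by fun_prop) fun w hw => ⟨hw.2.2.1, hw.2.1⟩)
  have hA := (hpc.comp_unitBox4 (by fun_prop) (by fun_prop) fun w hw => ⟨hw.1, hw.2.1⟩).mul
    (hpc.comp_unitBox4 (by fun_prop) (by fun_prop) fun w hw => ⟨hw.2.2.1, hw.2.2.2⟩)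
  have hpos : ∀ w ∈ unitBox4, 0 < q w.1 w.2.1 * q w.2.2.1 w.2.2.2 ∧
      0 < q w.1 w.2.2.2 * q w.2.2.1 w.2.1 := fun _ hw => mul_pos_of_mem_unitBox4 hqpos hw
  refine (((hB.div (hB.add hB') fun w hw => ?_).log fun w hw => ?_).neg).mul hA
  · exact (add_pos (hpos w hw).1 (hpos w hw).2).ne'
  · exact (div_pos (hpos w hw).1 (add_pos (hpos w hw).1 (hpos w hw).2)).ne'

noncomputable def symmCKLIntegrand (p q : ℝ → ℝ → ℝ) (w : ℝ × ℝ × ℝ × ℝ) : ℝ :=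
  cklIntegrand p q w + cklIntegrand p q (swapY w)

theorem symmCKLIntegrand_apply (x1 y1 x2 y2 : ℝ) :
    symmCKLIntegrand p q (x1, y1, x2, y2) = pairCrossEntropy (p x1 y1 * p x2 y2)
      (p x1 y2 * p x2 y1) (q x1 y1 * q x2 y2) (q x1 y2 * q x2 y1) := rfl

theorem ContinuousOn.symmCKLIntegrand (h : ContinuousOn (cklIntegrand p q) unitBox4) :
    ContinuousOn (symmCKLIntegrand p q) unitBox4 :=
  h.add (h.comp continuous_swapY.continuousOn mapsTo_swapY_unitBox4)

theorem setIntegral_symmCKLIntegrand (h : IntegrableOn (cklIntegrand p q) unitBox4) :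
    ∫ w in unitBox4, symmCKLIntegrand p q w = 2 * expCondKLScore p q := by
  unfold symmCKLIntegrand
  rw [integral_add h (IntegrableOn.comp_swapY h), setIntegral_comp_swapY,
    expCondKLScore, two_mul]

theorem symmCKLIntegrand_self_le (hppos : ∀ x ∈ Icc (0:ℝ) 1, ∀ y ∈ Icc (0:ℝ) 1, 0 < p x y)
    (hqpos : ∀ x ∈ Icc (0:ℝ) 1, ∀ y ∈ Icc (0:ℝ) 1, 0 < q x y) {x1 y1 x2 y2 : ℝ}
    (hw : (x1, y1, x2, y2) ∈ unitBox4) :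
    symmCKLIntegrand p p (x1, y1, x2, y2) ≤ symmCKLIntegrand p q (x1, y1, x2, y2) := by
  obtain ⟨hA, hA'⟩ := mul_pos_of_mem_unitBox4 hppos hw
  obtain ⟨hB, hB'⟩ := mul_pos_of_mem_unitBox4 hqpos hw
  rw [symmCKLIntegrand_apply, symmCKLIntegrand_apply]
  exact pairCrossEntropy_self_le hA hA' hB hB'

theorem condProb_eq_of_symmCKLIntegrand_eq
    (hppos : ∀ x ∈ Icc (0:ℝ) 1, ∀ y ∈ Icc (0:ℝ) 1, 0 < p x y)
    (hqpos : ∀ x ∈ Icc (0:ℝ) 1, ∀ y ∈ Icc (0:ℝ) 1, 0 < q x y) {x1 y1 x2 y2 : ℝ}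
    (hw : (x1, y1, x2, y2) ∈ unitBox4)
    (h : symmCKLIntegrand p q (x1, y1, x2, y2) = symmCKLIntegrand p p (x1, y1, x2, y2)) :
    q x1 y1 * q x2 y2 / (q x1 y1 * q x2 y2 + q x1 y2 * q x2 y1)
      = p x1 y1 * p x2 y2 / (p x1 y1 * p x2 y2 + p x1 y2 * p x2 y1) := by
  obtain ⟨hA, hA'⟩ := mul_pos_of_mem_unitBox4 hppos hw
  obtain ⟨hB, hB'⟩ := mul_pos_of_mem_unitBox4 hqpos hw
  by_contra hne
  rw [symmCKLIntegrand_apply, symmCKLIntegrand_apply] at h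
  exact (pairCrossEntropy_self_lt hA hA' hB hB' hne).ne' h

end CKL

theorem condKLScore_equality_condition_general (p q : ℝ → ℝ → ℝ)
    (hpc : ContinuousOn (fun z : ℝ × ℝ => p z.1 z.2) (Icc (0:ℝ) 1 ×ˢ Icc (0:ℝ) 1))
    (hqc : ContinuousOn (fun z : ℝ × ℝ => q z.1 z.2) (Icc (0:ℝ) 1 ×ˢ Icc (0:ℝ) 1))
    (hppos : ∀ x ∈ Icc (0:ℝ) 1, ∀ y ∈ Icc (0:ℝ) 1, 0 < p x y)
    (hqpos : ∀ x ∈ Icc (0:ℝ) 1, ∀ y ∈ Icc (0:ℝ) 1, 0 < q x y)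
    (heq : expCondKLScore p q = expCondKLScore p p) :
    ∀ x1 ∈ Icc (0:ℝ) 1, ∀ y1 ∈ Icc (0:ℝ) 1, ∀ x2 ∈ Icc (0:ℝ) 1, ∀ y2 ∈ Icc (0:ℝ) 1,
      q x1 y1 * q x2 y2 / (q x1 y1 * q x2 y2 + q x1 y2 * q x2 y1)
        = p x1 y1 * p x2 y2 / (p x1 y1 * p x2 y2 + p x1 y2 * p x2 y1) ∧
      q x1 y1 * q x2 y2 / (q x1 y2 * q x2 y1)
        = p x1 y1 * p x2 y2 / (p x1 y2 * p x2 y1) := by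
  have hcq := continuousOn_cklIntegrand hpc hqc hqpos
  have hcp := continuousOn_cklIntegrand hpc hpc hppos
  set G := fun w => symmCKLIntegrand p q w - symmCKLIntegrand p p w
  have hG_cont : ContinuousOn G unitBox4 := hcq.symmCKLIntegrand.sub hcp.symmCKLIntegrand
  have hG_nonneg : ∀ w ∈ unitBox4, 0 ≤ G w := fun ⟨_, _, _, _⟩ hw =>
    sub_nonneg.2 (symmCKLIntegrand_self_le hppos hqpos hw)
  have hG_integral : ∫ w in unitBox4, G w = 0 := by
    rw [integral_sub (hcq.symmCKLIntegrand.integrableOn_compact isCompact_unitBox4)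
      (hcp.symmCKLIntegrand.integrableOn_compact isCompact_unitBox4),
      setIntegral_symmCKLIntegrand (hcq.integrableOn_compact isCompact_unitBox4),
      setIntegral_symmCKLIntegrand (hcp.integrableOn_compact isCompact_unitBox4), heq, sub_self]
  have hG_zero := hG_cont.eqOn_zero_of_setIntegral_eq_zero measurableSet_unitBox4
    unitBox4_subset_closure_interior hG_nonneg
    (hG_cont.integrableOn_compact isCompact_unitBox4) hG_integral
  intro x1 hx1 y1 hy1 x2 hx2 y2 hy2
  have hw : (x1, y1, x2, y2) ∈ unitBox4 := ⟨hx1, hy1, hx2, hy2⟩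
  have hcond := condProb_eq_of_symmCKLIntegrand_eq hppos hqpos hw (sub_eq_zero.1 (hG_zero hw))
  obtain ⟨hA, hA'⟩ := mul_pos_of_mem_unitBox4 hppos hw
  obtain ⟨hB, hB'⟩ := mul_pos_of_mem_unitBox4 hqpos hw
  exact ⟨hcond, div_eq_div_of_div_add_eq_div_add hA hA' hB hB' hcond⟩

/-- Equality condition for the conditional KL score: if `p`, `q` are continuous
strictly positive probability densities on `[0,1]²` with finite expected scores
and `S(p,q) = S(p,p)`, then the conditional probabilities (equivalently, the
cross-ratios) of `p` and `q` coincide everywhere on `[0,1]⁴`. -/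
theorem condKLScore_equality_condition (p q : ℝ → ℝ → ℝ)
    (hpc : ContinuousOn (fun z : ℝ × ℝ => p z.1 z.2) (Icc (0:ℝ) 1 ×ˢ Icc (0:ℝ) 1))
    (hqc : ContinuousOn (fun z : ℝ × ℝ => q z.1 z.2) (Icc (0:ℝ) 1 ×ˢ Icc (0:ℝ) 1))
    (hppos : ∀ x ∈ Icc (0:ℝ) 1, ∀ y ∈ Icc (0:ℝ) 1, 0 < p x y)
    (hqpos : ∀ x ∈ Icc (0:ℝ) 1, ∀ y ∈ Icc (0:ℝ) 1, 0 < q x y)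
    (hp1 : ∫ z in Icc (0:ℝ) 1 ×ˢ Icc (0:ℝ) 1, p z.1 z.2 = 1)
    (hq1 : ∫ z in Icc (0:ℝ) 1 ×ˢ Icc (0:ℝ) 1, q z.1 z.2 = 1)
    (hfin_pq : IntegrableOn (cklIntegrand p q) unitBox4)
    (hfin_pp : IntegrableOn (cklIntegrand p p) unitBox4)
    (heq : expCondKLScore p q = expCondKLScore p p) :
    ∀ x1 ∈ Icc (0:ℝ) 1, ∀ y1 ∈ Icc (0:ℝ) 1, ∀ x2 ∈ Icc (0:ℝ) 1, ∀ y2 ∈ Icc (0:ℝ) 1,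
      q x1 y1 * q x2 y2 / (q x1 y1 * q x2 y2 + q x1 y2 * q x2 y1)
        = p x1 y1 * p x2 y2 / (p x1 y1 * p x2 y2 + p x1 y2 * p x2 y1) ∧
      q x1 y1 * q x2 y2 / (q x1 y2 * q x2 y1)
        = p x1 y1 * p x2 y2 / (p x1 y2 * p x2 y1) :=
  condKLScore_equality_condition_general p q hpc hqc hppos hqpos heq
end

section
/- Let c be a continuous strictly positive copula density on [0,1]^2 and let a, b : [0,1] → ℝ be continuous functions such that the function c'(x,y) = c(x,y)·exp(a(x)+b(y)) is also a copula density. Then c' = c; equivalently, a(x) + b(y) = 0 for all (x,y) ∈ [0,1]^2. -/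
open Set MeasureTheory

/-- Uniqueness of the normalizing functions: if `c` is a continuous strictly
positive copula density and `c'(x,y) = c(x,y)·exp(a(x)+b(y))` (with `a`, `b`
continuous) is also a copula density, then `c' = c`; equivalently,
`a(x) + b(y) = 0` on `[0,1]²`. -/
theorem copula_exp_factor_trivial (c : ℝ → ℝ → ℝ) (a b : ℝ → ℝ)
    (hc_cont : ContinuousOn (fun z : ℝ × ℝ => c z.1 z.2) (Icc (0:ℝ) 1 ×ˢ Icc (0:ℝ) 1))
    (hc_pos : ∀ x ∈ Icc (0:ℝ) 1, ∀ y ∈ Icc (0:ℝ) 1, 0 < c x y)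
    (ha : ContinuousOn a (Icc (0:ℝ) 1))
    (hb : ContinuousOn b (Icc (0:ℝ) 1))
    (hc_marg1 : ∀ x ∈ Icc (0:ℝ) 1, ∫ y in Icc (0:ℝ) 1, c x y = 1)
    (hc_marg2 : ∀ y ∈ Icc (0:ℝ) 1, ∫ x in Icc (0:ℝ) 1, c x y = 1)
    (hc'_marg1 : ∀ x ∈ Icc (0:ℝ) 1, ∫ y in Icc (0:ℝ) 1, c x y * Real.exp (a x + b y) = 1)
    (hc'_marg2 : ∀ y ∈ Icc (0:ℝ) 1, ∫ x in Icc (0:ℝ) 1, c x y * Real.exp (a x + b y) = 1) :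
    ∀ x ∈ Icc (0:ℝ) 1, ∀ y ∈ Icc (0:ℝ) 1,
      a x + b y = 0 ∧ c x y * Real.exp (a x + b y) = c x y := by
  have hI : MeasurableSet (Icc (0:ℝ) 1) := measurableSet_Icc
  -- slice continuity
  have hcx : ∀ x ∈ Icc (0:ℝ) 1, ContinuousOn (fun y => c x y) (Icc (0:ℝ) 1) := by
    intro x hx
    exact hc_cont.comp ((continuous_const.prodMk continuous_id).continuousOn)
      (fun y hy => ⟨hx, hy⟩)
  have hcy : ∀ y ∈ Icc (0:ℝ) 1, ContinuousOn (fun x => c x y) (Icc (0:ℝ) 1) := by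
    intro y hy
    exact hc_cont.comp ((continuous_id.prodMk continuous_const).continuousOn)
      (fun x hx => ⟨hx, hy⟩)
  -- maximum of b
  obtain ⟨y₀, hy₀, hy₀max⟩ := isCompact_Icc.exists_isMaxOn
    (nonempty_Icc.mpr zero_le_one) hb
  set β := b y₀ with hβ
  -- Step 1: for every x, 0 ≤ a x + β
  have step1 : ∀ x ∈ Icc (0:ℝ) 1, 0 ≤ a x + β := by
    intro x hx
    have hint1 : IntegrableOn (fun y => c x y * Real.exp (a x + b y)) (Icc (0:ℝ) 1) :=
      ((hcx x hx).mul
        (Real.continuous_exp.comp_continuousOn (continuousOn_const.add hb))).integrableOn_compact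
        isCompact_Icc
    have hint2 : IntegrableOn (fun y => c x y * Real.exp (a x + β)) (Icc (0:ℝ) 1) :=
      ((hcx x hx).mul continuousOn_const).integrableOn_compact isCompact_Icc
    have hle : ∫ y in Icc (0:ℝ) 1, c x y * Real.exp (a x + b y)
        ≤ ∫ y in Icc (0:ℝ) 1, c x y * Real.exp (a x + β) := by
      refine setIntegral_mono_on hint1 hint2 hI (fun y hy => ?_)
      have := hy₀max hy
      gcongr
      · exact (hc_pos x hx y hy).le
      · exact this
    have heq : ∫ y in Icc (0:ℝ) 1, c x y * Real.exp (a x + β)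
        = Real.exp (a x + β) := by
      rw [integral_mul_const, hc_marg1 x hx, one_mul]
    rw [hc'_marg1 x hx, heq] at hle
    exact Real.one_le_exp_iff.mp hle
  -- Step 2: a ≡ -β on [0,1]
  have step2 : ∀ x ∈ Icc (0:ℝ) 1, a x = -β := by
    have hint1 : IntegrableOn (fun x => c x y₀ * Real.exp (a x + β)) (Icc (0:ℝ) 1) :=
      ((hcy y₀ hy₀).mul
        (Real.continuous_exp.comp_continuousOn (ha.add continuousOn_const))).integrableOn_compact
        isCompact_Icc
    have hint2 : IntegrableOn (fun x => c x y₀) (Icc (0:ℝ) 1) :=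
      (hcy y₀ hy₀).integrableOn_compact isCompact_Icc
    have hzero : ∫ x in Icc (0:ℝ) 1,
        (c x y₀ * Real.exp (a x + β) - c x y₀) = 0 := by
      rw [integral_sub hint1 hint2, hc_marg2 y₀ hy₀]
      have : ∫ x in Icc (0:ℝ) 1, c x y₀ * Real.exp (a x + β)
          = ∫ x in Icc (0:ℝ) 1, c x y₀ * Real.exp (a x + b y₀) := rfl
      rw [this, hc'_marg2 y₀ hy₀]
      ring
    have hnonneg : ∀ x ∈ Icc (0:ℝ) 1,
        0 ≤ c x y₀ * Real.exp (a x + β) - c x y₀ := by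
      intro x hx
      have h1 : (1:ℝ) ≤ Real.exp (a x + β) := Real.one_le_exp_iff.mpr (step1 x hx)
      nlinarith [hc_pos x hx y₀ hy₀]
    have hae : (fun x => c x y₀ * Real.exp (a x + β) - c x y₀)
        =ᵐ[volume.restrict (Icc (0:ℝ) 1)] 0 := by
      refine (setIntegral_eq_zero_iff_of_nonneg_ae ?_ (hint1.sub hint2)).mp hzero
      exact (ae_restrict_iff' hI).mpr (Filter.Eventually.of_forall
        (fun x hx => hnonneg x hx))
    have heqOn : EqOn (fun x => c x y₀ * Real.exp (a x + β) - c x y₀)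
        (fun _ => (0:ℝ)) (Icc (0:ℝ) 1) := by
      refine Measure.eqOn_Icc_of_ae_eq volume (by norm_num) hae ?_ continuousOn_const
      exact ((hcy y₀ hy₀).mul
        (Real.continuous_exp.comp_continuousOn (ha.add continuousOn_const))).sub (hcy y₀ hy₀)
    intro x hx
    have h0 := heqOn hx
    simp only at h0
    have hcxp := hc_pos x hx y₀ hy₀
    have hexp : Real.exp (a x + β) = 1 := by
      have : c x y₀ * Real.exp (a x + β) = c x y₀ * 1 := by linarith
      exact mul_left_cancel₀ (ne_of_gt hcxp) this
    have := Real.exp_injective (hexp.trans Real.exp_zero.symm)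
    linarith
  -- Step 3: b ≡ β on [0,1]
  have step3 : ∀ y ∈ Icc (0:ℝ) 1, b y = β := by
    intro y hy
    have hcongr : ∫ x in Icc (0:ℝ) 1, c x y * Real.exp (a x + b y)
        = ∫ x in Icc (0:ℝ) 1, c x y * Real.exp (-β + b y) := by
      refine setIntegral_congr_fun hI (fun x hx => ?_)
      simp [step2 x hx]
    have h1 := hc'_marg2 y hy
    rw [hcongr, integral_mul_const, hc_marg2 y hy, one_mul] at h1
    have := Real.exp_injective (h1.trans Real.exp_zero.symm)
    linarith
  intro x hx y hy
  have hab : a x + b y = 0 := by rw [step2 x hx, step3 y hy]; ring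
  exact ⟨hab, by rw [hab, Real.exp_zero, mul_one]⟩
end

section
/- Let h₁,…,h_k : [0,1]^2 → ℝ, θ ∈ ℝ^k, and a, b : [0,1] → ℝ, and define c_θ(x,y) = exp(Σᵢ θᵢ hᵢ(x,y) + a(x) + b(y)). Then for all x¹,y¹,x²,y² ∈ [0,1], the conditional KL score satisfies S(x¹,y¹,x²,y²,c_θ) = log(1 + exp(Σᵢ θᵢ Hᵢ)), where Hᵢ = hᵢ(x¹,y²) + hᵢ(x²,y¹) − hᵢ(x¹,y¹) − hᵢ(x²,y²). In particular, the score does not involve the normalizing functions a and b. -/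
open Set

lemma neg_log_exp_ratio (S T : ℝ) :
    -Real.log (Real.exp S / (Real.exp S + Real.exp T))
      = Real.log (1 + Real.exp (T - S)) := by
  rw [← Real.log_inv]
  congr 1
  rw [inv_div, add_div, div_self (Real.exp_ne_zero S), Real.exp_sub]

/-- For a minimum-information-form density
`c_θ(x,y) = exp(Σᵢ θᵢ hᵢ(x,y) + a(x) + b(y))`, the conditional KL score equals
`log(1 + exp(Σᵢ θᵢ Hᵢ))` with
`Hᵢ = hᵢ(x¹,y²) + hᵢ(x²,y¹) − hᵢ(x¹,y¹) − hᵢ(x²,y²)`;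
in particular it does not involve the normalizing functions `a` and `b`. -/
theorem condKLScore_min_info_form
    (k : ℕ) (h : Fin k → ℝ → ℝ → ℝ) (θ : Fin k → ℝ) (a b : ℝ → ℝ) :
    ∀ x1 ∈ Icc (0:ℝ) 1, ∀ y1 ∈ Icc (0:ℝ) 1, ∀ x2 ∈ Icc (0:ℝ) 1, ∀ y2 ∈ Icc (0:ℝ) 1,
      condKLScore (fun x y => Real.exp ((∑ i, θ i * h i x y) + a x + b y)) x1 y1 x2 y2
        = Real.log (1 + Real.exp (∑ i, θ i *
            (h i x1 y2 + h i x2 y1 - h i x1 y1 - h i x2 y2))) := by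
  intro x1 _ y1 _ x2 _ y2 _
  unfold condKLScore
  simp only [← Real.exp_add]
  rw [neg_log_exp_ratio]
  congr 2
  simp only [mul_sub, mul_add, Finset.sum_sub_distrib, Finset.sum_add_distrib]
  ring
end
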